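/- arXiv:1801.03538 — 2 statements merged into one kernel-verified Lean document; each statement's English description precedes it below -/
import Mathlib

section
/- If f : ℝ × ℝ → ℝ is continuous in each variable separately and for every y ∈ ℝ the function x ↦ f(x,y) is nondecreasing, then f is jointly continuous. -/
/-!
Fix `(a, b)` and `u > f a b`. By continuity of `f · b` and the order topology on the first
factor there is `c` with `f c b < u` and `x ≤ c` for all `x` near `a`; by continuity of `f c`,
`f c y < u` for `y` near `b`, so monotonicity gives `f x y ≤ f c y < u` near `(a, b)`.
The lower bound is the order dual.
-/

open Filter Set Topology Function

section

variable {X : Type*} [LinearOrder X] [TopologicalSpace X] [ClosedIciTopology X]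

theorem exists_mem_Iic_mem_nhds {a : X} {s : Set X} (hs : s ∈ 𝓝 a) :
    ∃ c ∈ s, Iic c ∈ 𝓝 a := by
  rcases (𝓝[>] a).eq_or_neBot with hbot | hne
  · refine ⟨a, mem_of_mem_nhds hs, ?_⟩
    rw [← nhdsLE_sup_nhdsGT, hbot, sup_bot_eq]
    exact self_mem_nhdsWithin
  · obtain ⟨c, hcs, hac⟩ : (s ∩ Ioi a).Nonempty :=
      nonempty_of_mem (inter_mem (mem_nhdsWithin_of_mem_nhds hs) self_mem_nhdsWithin)
    exact ⟨c, hcs, mem_of_superset (Iio_mem_nhds hac) Iio_subset_Iic_self⟩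

end

section

variable {X Y β : Type*} [LinearOrder X] [TopologicalSpace X] [OrderClosedTopology X]
  [TopologicalSpace Y] [LinearOrder β] [TopologicalSpace β] [OrderTopology β]
  {f : X → Y → β} {a : X} {b : Y}

theorem eventually_uncurry_lt_of_monotone_left (hcx : ContinuousAt (f · b) a)
    (hcy : ∀ x, ContinuousAt (f x) b) (hm : ∀ y, Monotone (f · y)) {u : β} (hu : f a b < u) :
    ∀ᶠ p in 𝓝 (a, b), uncurry f p < u := by
  obtain ⟨c, hcu, hc⟩ := exists_mem_Iic_mem_nhds (hcx.eventually (gt_mem_nhds hu))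
  rw [nhds_prod_eq]
  filter_upwards [prod_mem_prod hc ((hcy c).eventually (gt_mem_nhds hcu))]
    with ⟨x, y⟩ ⟨hxc, hfc⟩
  exact (hm y hxc).trans_lt hfc

theorem continuousAt_uncurry_of_monotone_left (hcx : ContinuousAt (f · b) a)
    (hcy : ∀ x, ContinuousAt (f x) b) (hm : ∀ y, Monotone (f · y)) :
    ContinuousAt (uncurry f) (a, b) :=
  tendsto_order.2
    ⟨fun _ hl => eventually_uncurry_lt_of_monotone_left (X := Xᵒᵈ) (β := βᵒᵈ) hcx hcy
        (fun y => (hm y).dual) hl,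
      fun _ hu => eventually_uncurry_lt_of_monotone_left hcx hcy hm hu⟩

theorem continuous_uncurry_of_monotone_left (hcx : ∀ y, Continuous (f · y))
    (hcy : ∀ x, Continuous (f x)) (hm : ∀ y, Monotone (f · y)) : Continuous (uncurry f) :=
  continuous_iff_continuousAt.2 fun ⟨_, b⟩ =>
    continuousAt_uncurry_of_monotone_left (hcx b).continuousAt (fun x => (hcy x).continuousAt) hm

end

theorem young_real_monotone (f : ℝ → ℝ → ℝ)
    (hcx : ∀ y, Continuous fun x => f x y)
    (hcy : ∀ x, Continuous fun y => f x y)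
    (hm : ∀ y, Monotone fun x => f x y) :
    Continuous fun p : ℝ × ℝ => f p.1 p.2 :=
  continuous_uncurry_of_monotone_left hcx hcy hm
end

section
/- Let T be a linear order with order topology, X a topological space, T₁ a linear order with order topology, and f : T × X → T₁ separately continuous with all sections t ↦ f(t,x) monotone. Then for every point (t₀,x₀) and every open set V ∋ f(t₀,x₀) in T₁, there is a basic open box (I × U) ∋ (t₀,x₀), with I an order-open interval in T and U open in X, such that f(I × U) ⊆ V. -/
/-!
Separate continuity gives joint continuity at `(t₀, x₀)`. Pick an order-connected open
neighbourhood `W` of `f t₀ x₀` and, by continuity of `f · x₀`, a neighbourhood `[t₁, t₂]` of `t₀`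
mapped into `W`. By continuity of `f t₁` and `f t₂`, both `f t₁ x` and `f t₂ x` stay in `W` for `x`
near `x₀`, and since `f · x` is monotone or antitone, `f t x` lies between them, hence in `W`, for
every `t ∈ [t₁, t₂]`.
-/

/-- Embedding of `T` into `T` with `±∞` adjoined. -/
def embInfty {T : Type*} (s : T) : WithBot (WithTop T) := ((s : WithTop T) : WithBot (WithTop T))

open Set Filter Topology

section embInfty

variable {T : Type*}

@[simp]
theorem embInfty_lt_embInfty [Preorder T] {s t : T} : embInfty s < embInfty t ↔ s < t :=
  WithBot.coe_lt_coe.trans WithTop.coe_lt_coe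

variable [LinearOrder T] [TopologicalSpace T] [OrderTopology T] {t₀ : T} {N : Set T}

theorem exists_lt_embInfty_forall_le_mem (hN : N ∈ 𝓝 t₀) :
    ∃ a < embInfty t₀, ∀ t, a < embInfty t → t ≤ t₀ → t ∈ N := by
  by_cases h : ∃ l, l < t₀
  · obtain ⟨l, hl, hlN⟩ := exists_Ioc_subset_of_mem_nhds hN h
    exact ⟨embInfty l, embInfty_lt_embInfty.2 hl,
      fun t hlt hle => hlN ⟨embInfty_lt_embInfty.1 hlt, hle⟩⟩
  · push Not at h
    exact ⟨⊥, WithBot.bot_lt_coe _,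
      fun t _ hle => le_antisymm hle (h t) ▸ mem_of_mem_nhds hN⟩

theorem exists_embInfty_lt_forall_ge_mem (hN : N ∈ 𝓝 t₀) :
    ∃ b > embInfty t₀, ∀ t, embInfty t < b → t₀ ≤ t → t ∈ N := by
  by_cases h : ∃ u, t₀ < u
  · obtain ⟨u, hu, huN⟩ := exists_Ico_subset_of_mem_nhds hN h
    exact ⟨embInfty u, embInfty_lt_embInfty.2 hu,
      fun t hlt hle => huN ⟨hle, embInfty_lt_embInfty.1 hlt⟩⟩
  · push Not at h
    exact ⟨⊤, WithBot.coe_lt_coe.2 (WithTop.coe_lt_top t₀),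
      fun t _ hle => le_antisymm (h t) hle ▸ mem_of_mem_nhds hN⟩

theorem exists_embInfty_mem_Ioo_subset (hN : N ∈ 𝓝 t₀) :
    ∃ a b : WithBot (WithTop T), a < embInfty t₀ ∧ embInfty t₀ < b ∧
      ∀ t, a < embInfty t → embInfty t < b → t ∈ N := by
  obtain ⟨a, ha, haN⟩ := exists_lt_embInfty_forall_le_mem hN
  obtain ⟨b, hb, hbN⟩ := exists_embInfty_lt_forall_ge_mem hN
  exact ⟨a, b, ha, hb, fun t hat htb => (le_total t t₀).elim (haN t hat) (hbN t htb)⟩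

end embInfty

theorem IsOpen.ordConnectedComponent {α : Type*} [LinearOrder α] [TopologicalSpace α]
    [OrderTopology α] {s : Set α} (hs : IsOpen s) (x : α) :
    IsOpen (ordConnectedComponent s x) :=
  isOpen_iff_mem_nhds.2 fun _ hy => ordConnectedComponent_eq hy ▸
    ordConnectedComponent_mem_nhds.2 (hs.mem_nhds (ordConnectedComponent_subset hy))

theorem Set.OrdConnected.mapsTo_Icc {α β : Type*} [Preorder α] [Preorder β] {s : Set β}
    (hs : s.OrdConnected) {g : α → β} (hg : Monotone g ∨ Antitone g) {a b : α}
    (ha : g a ∈ s) (hb : g b ∈ s) : MapsTo g (Icc a b) s := by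
  rintro t ⟨hat, htb⟩
  rcases hg with hg | hg
  · exact hs.out ha hb ⟨hg hat, hg htb⟩
  · exact hs.out hb ha ⟨hg htb, hg hat⟩

theorem continuousAt_uncurry_of_monotone_or_antitone {T T₁ X : Type*}
    [LinearOrder T] [TopologicalSpace T] [OrderTopology T]
    [LinearOrder T₁] [TopologicalSpace T₁] [OrderTopology T₁] [TopologicalSpace X]
    {f : T → X → T₁} {t₀ : T} {x₀ : X}
    (hct : ContinuousAt (fun t => f t x₀) t₀) (hcx : ∀ t, ContinuousAt (f t) x₀)
    (hm : ∀ x, Monotone (fun t => f t x) ∨ Antitone (fun t => f t x)) :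
    ContinuousAt (Function.uncurry f) (t₀, x₀) := by
  rw [ContinuousAt, nhds_prod_eq]
  intro V hV
  set W := ordConnectedComponent (interior V) (f t₀ x₀)
  have hWo : IsOpen W := isOpen_interior.ordConnectedComponent _
  have hWV : W ⊆ V := ordConnectedComponent_subset.trans interior_subset
  have hW : W ∈ 𝓝 (f t₀ x₀) :=
    hWo.mem_nhds (self_mem_ordConnectedComponent.2 (mem_interior_iff_mem_nhds.2 hV))
  obtain ⟨t₁, t₂, ⟨ht₁, ht₂⟩, hI, hIW⟩ := exists_Icc_mem_subset_of_mem_nhds (hct hW)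
  have hU : {x | f t₁ x ∈ W} ∩ {x | f t₂ x ∈ W} ∈ 𝓝 x₀ :=
    inter_mem (hcx t₁ (hWo.mem_nhds (hIW ⟨le_rfl, ht₁.trans ht₂⟩)))
      (hcx t₂ (hWo.mem_nhds (hIW ⟨ht₁.trans ht₂, le_rfl⟩)))
  apply mem_map.2
  filter_upwards [prod_mem_prod hI hU] with ⟨t, x⟩ ⟨ht, hx₁, hx₂⟩
  exact hWV ((inferInstance : W.OrdConnected).mapsTo_Icc (hm x) hx₁ hx₂ ht)

theorem young_pointwise_box {T T₁ X : Type*}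
    [LinearOrder T] [TopologicalSpace T] [OrderTopology T]
    [LinearOrder T₁] [TopologicalSpace T₁] [OrderTopology T₁]
    [TopologicalSpace X]
    (f : T → X → T₁)
    (hct : ∀ x, Continuous fun t => f t x)
    (hcx : ∀ t, Continuous fun x => f t x)
    (hm : ∀ x, Monotone (fun t => f t x) ∨ Antitone (fun t => f t x))
    (t₀ : T) (x₀ : X) (V : Set T₁) (hV : IsOpen V) (hfV : f t₀ x₀ ∈ V) :
    ∃ a b : WithBot (WithTop T), a < embInfty t₀ ∧ embInfty t₀ < b ∧
      ∃ U : Set X, IsOpen U ∧ x₀ ∈ U ∧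
        ∀ t : T, a < embInfty t → embInfty t < b → ∀ x ∈ U, f t x ∈ V := by
  have hf : Function.uncurry f ⁻¹' V ∈ 𝓝 (t₀, x₀) :=
    continuousAt_uncurry_of_monotone_or_antitone (hct x₀).continuousAt
      (fun t => (hcx t).continuousAt) hm (hV.mem_nhds hfV)
  obtain ⟨N, U, hNo, ht₀N, hUo, hx₀U, hNU⟩ := mem_nhds_prod_iff'.1 hf
  obtain ⟨a, b, ha, hb, habN⟩ := exists_embInfty_mem_Ioo_subset (hNo.mem_nhds ht₀N)
  exact ⟨a, b, ha, hb, U, hUo, hx₀U, fun t hat htb x hx => hNU (mk_mem_prod (habN t hat htb) hx)⟩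
end
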